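/- arXiv:1605.05596 — 6 statements merged into one kernel-verified Lean document; each statement's English description precedes it below -/
import Mathlib

section
/- Stein–Strömberg covering theorem for sparse radii: Let (X,d,μ) be a metric measure space such that μ satisfies a local comparability condition with constant C(μ). Let R = {r_n : n ∈ ℤ} be a T-lacunary sequence of radii with T > 1, and suppose there exists t ∈ (0,1) with T·t ≥ 1 such that μ (t,K)-microblossoms boundedly. Let B(x_1,s_1), …, B(x_M,s_M) be a finite collection of balls with s_i ∈ R and μ(B(x_i,s_i)) > 0, ordered so that s_1 ≥ s_2 ≥ … ≥ s_M, and set U = ⋃_{i=1}^M B(x_i, t·s_i). Then there exist indices i_1 < i_2 < … < i_N in {1,…,M} such that, writing D_{i_1},…,D_{i_N} for the disjointifications of the reduced balls B(x_{i_1}, t·s_{i_1}),…,B(x_{i_N}, t·s_{i_N}), one has (i) μ(U) ≤ (K+1)·μ(⋃_{j=1}^N B(x_{i_j}, t·s_{i_j})), and (ii) for every z ∈ X, Σ_{j=1}^N (μ(D_{i_j})/μ(B(x_{i_j}, s_{i_j})))·1_{B(x_{i_j}, s_{i_j})}(z) ≤ C(μ)·K + 1. -/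
open MeasureTheory Metric

/-- The uncentered `s`-blossom of a set `S`:
`Blu(S,s) = ⋃_{x ∈ S} ⋃ {B(y,s) : x ∈ B(y,s)}`. -/
def Blu {X : Type*} [PseudoMetricSpace X] (S : Set X) (s : ℝ) : Set X :=
  ⋃ x ∈ S, ⋃ y ∈ {y : X | x ∈ ball y s}, ball y s

open Finset
open scoped ENNReal

/-!
Process the balls in order of non-increasing radius and keep ball `i` unless the kept larger balls
`k` whose blossoms `Blu(B_k, t r_k)` contain its reduced ball already carry total weight
`∑ μ(D_k) / μ(B_k) ≥ 1`. A rejected reduced ball therefore lies in the superlevel set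
`{∑_k (μ(D_k) / μ(B_k)) 𝟙_{Blu(B_k, t r_k)} ≥ 1}`, whose measure is at most
`K ∑_k μ(D_k) = K μ(⋃ kept reduced balls)` by Chebyshev and microblossoming: this is (i).
For (ii), let `ρ` be the smallest radius of a kept ball containing `z`. The kept balls of radius `ρ`
containing `z` have disjoint `D_k` inside `Blu(B(z, ρ), t ρ)`, so by microblossoming and local
comparability they contribute at most `C K`. Let `B_b` be one of them. By lacunarity and `T t ≥ 1`,
each larger kept ball `B_k` containing `z` has `ρ ≤ t r_k`, so `z ∈ B(c_b, t r_k) ∩ B_k` and `B_k`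
dominates `B_b`; since `B_b` was kept, these balls have total weight `< 1`.
-/

section Blossom

variable {X : Type*} [PseudoMetricSpace X]

theorem isOpen_Blu (S : Set X) (s : ℝ) : IsOpen (Blu S s) :=
  isOpen_biUnion fun _ _ => isOpen_biUnion fun _ _ => isOpen_ball

theorem ball_subset_Blu {S : Set X} {s : ℝ} {y : X} (h : (ball y s ∩ S).Nonempty) :
    ball y s ⊆ Blu S s := by
  obtain ⟨x, hxy, hxS⟩ := h
  exact fun z hz => Set.mem_biUnion hxS (Set.mem_biUnion (show x ∈ ball y s from hxy) hz)

end Blossom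

theorem exists_finset_forall_mem_iff_filter_lt {ι : Type*} [LinearOrder ι] [Fintype ι]
    (P : Finset ι → ι → Prop) : ∃ S : Finset ι, ∀ i, i ∈ S ↔ P {k ∈ S | k < i} i := by
  classical
  suffices h : ∀ A : Finset ι, ∃ S ⊆ A, ∀ i ∈ A, (i ∈ S ↔ P {k ∈ S | k < i} i) by
    obtain ⟨S, -, hS⟩ := h univ
    exact ⟨S, fun i => hS i (mem_univ i)⟩
  intro A
  induction A using Finset.induction_on_max with
  | empty => exact ⟨∅, subset_refl _, by simp⟩
  | insert a A ha ih =>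
    obtain ⟨S, hSA, hS⟩ := ih
    have haS : a ∉ S := fun h => (ha a (hSA h)).false
    have hSa : {k ∈ S | k < a} = S := filter_true_of_mem fun k hk => ha k (hSA hk)
    have hfilter : ∀ i ∈ A, {k ∈ insert a S | k < i} = {k ∈ S | k < i} := fun i hi => by
      rw [filter_insert, if_neg (ha i hi).not_gt]
    by_cases hPa : P S a
    · refine ⟨insert a S, insert_subset_insert a hSA, fun i hi => ?_⟩
      rcases mem_insert.mp hi with rfl | hi
      · simpa [filter_insert, hSa] using hPa
      · rw [hfilter i hi, mem_insert, or_iff_right (ha i hi).ne, hS i hi]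
    · refine ⟨S, hSA.trans (subset_insert a A), fun i hi => ?_⟩
      rcases mem_insert.mp hi with rfl | hi
      · simpa [hSa, haS] using hPa
      · exact hS i hi

theorem Finset.sum_orderEmbOfFin {ι M : Type*} [LinearOrder ι] [AddCommMonoid M] (S : Finset ι)
    (g : ι → M) : ∑ j, g (S.orderEmbOfFin rfl j) = ∑ k ∈ S, g k := by
  conv_rhs => rw [← S.map_orderEmbOfFin_univ rfl, sum_map]
  rfl

section Disjointification

variable {X ι : Type*} [LinearOrder ι] (A : ι → Set X)

/-- For `k ∈ S`, the disjointification `D_k` of the subfamily `(A j)_{j ∈ S}`. -/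
def disjointification (S : Finset ι) (k : ι) : Set X :=
  A k \ ⋃ j ∈ S, ⋃ (_ : j < k), A j

theorem disjointification_subset (S : Finset ι) (k : ι) : disjointification A S k ⊆ A k :=
  Set.sdiff_subset

theorem disjointification_filter_lt (S : Finset ι) {i k : ι} (hki : k ≤ i) :
    disjointification A {j ∈ S | j < i} k = disjointification A S k := by
  simp only [disjointification, mem_filter]
  congr 1
  ext x
  simp only [Set.mem_iUnion, exists_prop]
  constructor
  · rintro ⟨j, ⟨hj, -⟩, hjk, hx⟩
    exact ⟨j, hj, hjk, hx⟩
  · rintro ⟨j, hj, hjk, hx⟩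
    exact ⟨j, ⟨hj, hjk.trans_le hki⟩, hjk, hx⟩

theorem pairwiseDisjoint_disjointification (S : Finset ι) :
    (S : Set ι).PairwiseDisjoint (disjointification A S) := by
  intro j hj k hk hjk
  wlog hlt : j < k generalizing j k
  · exact (this hk hj hjk.symm (hjk.lt_or_gt.resolve_left hlt)).symm
  exact Set.disjoint_left.mpr fun x hxj hxk =>
    hxk.2 (Set.mem_biUnion (mem_coe.mp hj) (Set.mem_iUnion.mpr ⟨hlt, hxj.1⟩))

theorem measurableSet_disjointification [MeasurableSpace X] (hA : ∀ k, MeasurableSet (A k))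
    (S : Finset ι) (k : ι) : MeasurableSet (disjointification A S k) :=
  (hA k).diff (S.measurableSet_biUnion fun j _ => MeasurableSet.iUnion fun _ => hA j)

theorem sum_measure_disjointification_le [MeasurableSpace X] (μ : Measure X)
    (hA : ∀ k, MeasurableSet (A k)) {S J : Finset ι} (hJS : J ⊆ S) {B : Set X}
    (hB : ∀ k ∈ J, disjointification A S k ⊆ B) :
    ∑ k ∈ J, μ (disjointification A S k) ≤ μ B := by
  rw [← measure_biUnion_finset
    ((pairwiseDisjoint_disjointification A S).subset (coe_subset.mpr hJS))
    fun k _ => measurableSet_disjointification A hA S k]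
  exact measure_mono (Set.iUnion₂_subset hB)

theorem iUnion_orderEmbOfFin (S : Finset ι) :
    ⋃ j, A (S.orderEmbOfFin rfl j) = ⋃ k ∈ S, A k := by
  rw [← Set.biUnion_range, range_orderEmbOfFin, set_biUnion_coe]

theorem disjointification_orderEmbOfFin (S : Finset ι) (j : Fin S.card) :
    A (S.orderEmbOfFin rfl j) \ ⋃ k, ⋃ (_ : k < j), A (S.orderEmbOfFin rfl k) =
      disjointification A S (S.orderEmbOfFin rfl j) := by
  rw [disjointification]
  congr 1
  ext x
  simp only [Set.mem_iUnion, exists_prop]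
  constructor
  · rintro ⟨k, hkj, hx⟩
    exact ⟨_, orderEmbOfFin_mem S rfl k, (S.orderEmbOfFin rfl).lt_iff_lt.mpr hkj, hx⟩
  · rintro ⟨m, hm, hmj, hx⟩
    obtain ⟨k, rfl⟩ : m ∈ Set.range (S.orderEmbOfFin rfl) := by
      rwa [range_orderEmbOfFin]
    exact ⟨k, (S.orderEmbOfFin rfl).lt_iff_lt.mp hmj, hx⟩

end Disjointification

namespace SteinStromberg

variable {X ι : Type*} [PseudoMetricSpace X] [MeasurableSpace X] [LinearOrder ι]
  (μ : Measure X) (c : ι → X) (r : ι → ℝ) (t : ℝ)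

noncomputable def weight (S : Finset ι) (k : ι) : ℝ≥0∞ :=
  μ (disjointification (fun i => ball (c i) (t * r i)) S k) / μ (ball (c k) (r k))

/-- If `k` dominates `i`, the reduced ball `B(c i, t r i) ⊆ B(c i, t r k)` lies in the blossom
`Blu (ball (c k) (r k)) (t * r k)`. -/
def Dominates (k i : ι) : Prop :=
  r i < r k ∧ (ball (c i) (t * r k) ∩ ball (c k) (r k)).Nonempty

open Classical in
/-- The greedy stopping rule. Only larger balls can dominate `i`, and they precede `i`, so the rule
may refer to the whole selected set instead of the part selected before `i`. -/
def IsSelection (S : Finset ι) : Prop :=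
  ∀ i, i ∈ S ↔ ∑ k ∈ S with Dominates c r t k i, weight μ c r t S k < 1

noncomputable def blossomSum (S : Finset ι) (z : X) : ℝ≥0∞ :=
  ∑ k ∈ S, (Blu (ball (c k) (r k)) (t * r k)).indicator (fun _ => weight μ c r t S k) z

theorem exists_isSelection [Fintype ι] (hr : Antitone r) : ∃ S, IsSelection μ c r t S := by
  classical
  obtain ⟨S, hS⟩ := exists_finset_forall_mem_iff_filter_lt fun F i =>
    ∑ k ∈ F with Dominates c r t k i, weight μ c r t F k < 1
  refine ⟨S, fun i => (hS i).trans ?_⟩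
  have hlt : ∀ k, Dominates c r t k i → k < i := fun k hk =>
    lt_of_not_ge fun hik => hk.1.not_ge (hr hik)
  have hweight : ∀ k ∈ {k ∈ S | Dominates c r t k i},
      weight μ c r t {j ∈ S | j < i} k = weight μ c r t S k := fun k hk => by
    rw [weight, weight, disjointification_filter_lt _ _ (hlt k (mem_filter.mp hk).2).le]
  rw [filter_filter, filter_congr fun k _ => and_iff_right_of_imp (hlt k), sum_congr rfl hweight]

theorem sum_orderEmbOfFin_indicator (S : Finset ι) (z : X) :
    ∑ j : Fin S.card, (ball (c (S.orderEmbOfFin rfl j)) (r (S.orderEmbOfFin rfl j))).indicator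
        (fun _ => μ (ball (c (S.orderEmbOfFin rfl j)) (t * r (S.orderEmbOfFin rfl j)) \
            ⋃ k, ⋃ (_ : k < j), ball (c (S.orderEmbOfFin rfl k)) (t * r (S.orderEmbOfFin rfl k))) /
          μ (ball (c (S.orderEmbOfFin rfl j)) (r (S.orderEmbOfFin rfl j)))) z =
      ∑ k ∈ S, (ball (c k) (r k)).indicator (fun _ => weight μ c r t S k) z := by
  refine Eq.trans (sum_congr rfl fun j _ => ?_) (sum_orderEmbOfFin S _)
  rw [weight, ← disjointification_orderEmbOfFin]

theorem one_le_blossomSum (ht : 0 ≤ t) {S : Finset ι} (hS : IsSelection μ c r t S) {i : ι}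
    (hi : i ∉ S) {z : X} (hz : z ∈ ball (c i) (t * r i)) : 1 ≤ blossomSum μ c r t S z := by
  classical
  have hmem : ∀ k, Dominates c r t k i → z ∈ Blu (ball (c k) (r k)) (t * r k) := fun k hk =>
    ball_subset_Blu hk.2 (ball_subset_ball (mul_le_mul_of_nonneg_left hk.1.le ht) hz)
  calc 1 ≤ ∑ k ∈ S with Dominates c r t k i, weight μ c r t S k :=
        not_lt.mp fun h => hi ((hS i).mpr h)
    _ = ∑ k ∈ S with Dominates c r t k i,
          (Blu (ball (c k) (r k)) (t * r k)).indicator (fun _ => weight μ c r t S k) z :=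
        sum_congr rfl fun k hk =>
          (Set.indicator_of_mem (hmem k (mem_filter.mp hk).2) fun _ => weight μ c r t S k).symm
    _ ≤ blossomSum μ c r t S z := sum_le_sum_of_subset (filter_subset _ S)

open Classical in
theorem sum_weight_lt_one_of_mem (hsparse : ∀ i k, r i < r k → r i ≤ t * r k) {S : Finset ι}
    (hS : IsSelection μ c r t S) {b : ι} (hb : b ∈ S) {z : X} (hzb : z ∈ ball (c b) (r b)) :
    ∑ k ∈ S with z ∈ ball (c k) (r k) ∧ r b < r k, weight μ c r t S k < 1 := by
  refine lt_of_le_of_lt (sum_le_sum_of_subset (monotone_filter_right S fun k _ hk => ?_))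
    ((hS b).mp hb)
  exact ⟨hk.2, z, ball_subset_ball (hsparse b k hk.2) hzb, hk.1⟩

variable [OpensMeasurableSpace X]

theorem measurable_blossomSum (S : Finset ι) : Measurable (blossomSum μ c r t S) :=
  Finset.measurable_sum S fun _ _ => measurable_const.indicator (isOpen_Blu _ _).measurableSet

theorem lintegral_blossomSum_le {K : ℝ≥0∞} (hr : ∀ i, 0 < r i)
    (hmb : ∀ x ρ, 0 < ρ → μ (Blu (ball x ρ) (t * ρ)) ≤ K * μ (ball x ρ)) (S : Finset ι) :
    ∫⁻ z, blossomSum μ c r t S z ∂μ ≤ K * μ (⋃ k ∈ S, ball (c k) (t * r k)) := by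
  have hY : ∀ k, MeasurableSet (Blu (ball (c k) (r k)) (t * r k)) := fun k =>
    (isOpen_Blu _ _).measurableSet
  calc ∫⁻ z, blossomSum μ c r t S z ∂μ
      = ∑ k ∈ S, weight μ c r t S k * μ (Blu (ball (c k) (r k)) (t * r k)) := by
        simp only [blossomSum]
        rw [lintegral_finsetSum _ fun k _ => measurable_const.indicator (hY k)]
        exact sum_congr rfl fun k _ => lintegral_indicator_const (hY k) _
    _ ≤ ∑ k ∈ S, K * (weight μ c r t S k * μ (ball (c k) (r k))) := by
        refine sum_le_sum fun k _ => ?_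
        rw [mul_left_comm]
        exact mul_le_mul_right (hmb _ _ (hr k)) _
    _ ≤ ∑ k ∈ S, K * μ (disjointification (fun i => ball (c i) (t * r i)) S k) := by
        refine sum_le_sum fun k _ => mul_le_mul_right ?_ K
        rw [weight, mul_comm]
        exact ENNReal.mul_div_le
    _ ≤ K * μ (⋃ k ∈ S, ball (c k) (t * r k)) := by
        rw [← mul_sum]
        gcongr
        exact sum_measure_disjointification_le _ μ (fun _ => measurableSet_ball) subset_rfl
          fun k hk => (disjointification_subset _ S k).trans
            fun _ hx => Set.mem_iUnion₂.mpr ⟨k, hk, hx⟩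

theorem measure_iUnion_le_of_isSelection {K : ℝ≥0∞} (ht : 0 ≤ t) (hr : ∀ i, 0 < r i)
    (hmb : ∀ x ρ, 0 < ρ → μ (Blu (ball x ρ) (t * ρ)) ≤ K * μ (ball x ρ)) {S : Finset ι}
    (hS : IsSelection μ c r t S) :
    μ (⋃ i, ball (c i) (t * r i)) ≤ (K + 1) * μ (⋃ k ∈ S, ball (c k) (t * r k)) := by
  set V := ⋃ k ∈ S, ball (c k) (t * r k)
  have hcover : ⋃ i, ball (c i) (t * r i) ⊆ V ∪ {z | 1 ≤ blossomSum μ c r t S z} := by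
    refine Set.iUnion_subset fun i z hz => ?_
    by_cases hi : i ∈ S
    · exact Or.inl (Set.mem_biUnion hi hz)
    · exact Or.inr (one_le_blossomSum μ c r t ht hS hi hz)
  have hcheb : μ {z | 1 ≤ blossomSum μ c r t S z} ≤ K * μ V := by
    calc μ {z | 1 ≤ blossomSum μ c r t S z}
        = 1 * μ {z | 1 ≤ blossomSum μ c r t S z} := (one_mul _).symm
      _ ≤ ∫⁻ z, blossomSum μ c r t S z ∂μ :=
        mul_meas_ge_le_lintegral₀ (measurable_blossomSum μ c r t S).aemeasurable 1
      _ ≤ K * μ V := lintegral_blossomSum_le μ c r t hr hmb S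
  calc μ (⋃ i, ball (c i) (t * r i)) ≤ μ V + μ {z | 1 ≤ blossomSum μ c r t S z} :=
        (measure_mono hcover).trans (measure_union_le _ _)
    _ ≤ μ V + K * μ V := by gcongr
    _ = (K + 1) * μ V := by ring

open Classical in
theorem sum_weight_le_of_radius_eq {C K : ℝ≥0∞} (hC : C ≠ 0) (hC' : C ≠ ⊤) (ht : 0 < t)
    (hloc : ∀ x y ρ, 0 < ρ → dist x y < ρ → μ (ball x ρ) ≤ C * μ (ball y ρ))
    (hmb : ∀ x ρ, 0 < ρ → μ (Blu (ball x ρ) (t * ρ)) ≤ K * μ (ball x ρ))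
    (S : Finset ι) (z : X) {ρ : ℝ} (hρ : 0 < ρ) :
    ∑ k ∈ S with z ∈ ball (c k) (r k) ∧ r k = ρ, weight μ c r t S k ≤ C * K := by
  set D := disjointification (fun i => ball (c i) (t * r i)) S
  set m := μ (ball z ρ)
  have hterm : ∀ k ∈ {k ∈ S | z ∈ ball (c k) (r k) ∧ r k = ρ},
      weight μ c r t S k ≤ C * m⁻¹ * μ (D k) := by
    intro k hk
    obtain ⟨-, hzk, hrk⟩ := mem_filter.mp hk
    rw [hrk, mem_ball] at hzk
    calc weight μ c r t S k = C * μ (D k) / (C * μ (ball (c k) ρ)) := by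
          rw [ENNReal.mul_div_mul_left _ _ hC hC', weight, hrk]
      _ ≤ C * μ (D k) / m := ENNReal.div_le_div_left (hloc z (c k) ρ hρ hzk) _
      _ = C * m⁻¹ * μ (D k) := by rw [div_eq_mul_inv]; ring
  have hsum : ∑ k ∈ S with z ∈ ball (c k) (r k) ∧ r k = ρ, μ (D k) ≤ K * m := by
    refine (sum_measure_disjointification_le _ μ (fun _ => measurableSet_ball) (filter_subset _ S)
      fun k hk => ?_).trans (hmb z ρ hρ)
    obtain ⟨-, hzk, hrk⟩ := mem_filter.mp hk
    rw [hrk] at hzk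
    refine (disjointification_subset _ S k).trans ?_
    rw [hrk]
    exact ball_subset_Blu ⟨c k, mem_ball_self (mul_pos ht hρ), mem_ball_comm.mp hzk⟩
  calc ∑ k ∈ S with z ∈ ball (c k) (r k) ∧ r k = ρ, weight μ c r t S k
      ≤ ∑ k ∈ S with z ∈ ball (c k) (r k) ∧ r k = ρ, C * m⁻¹ * μ (D k) := sum_le_sum hterm
    _ = C * m⁻¹ * ∑ k ∈ S with z ∈ ball (c k) (r k) ∧ r k = ρ, μ (D k) := (mul_sum _ _ _).symm
    _ ≤ C * m⁻¹ * (K * m) := by gcongr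
    _ = C * K * (m⁻¹ * m) := by ring
    _ ≤ C * K := mul_le_of_le_one_right' (ENNReal.inv_mul_le_one m)

theorem sum_indicator_weight_le {C K : ℝ≥0∞} (hC : C ≠ 0) (hC' : C ≠ ⊤) (ht : 0 < t)
    (hr : ∀ i, 0 < r i) (hsparse : ∀ i k, r i < r k → r i ≤ t * r k)
    (hloc : ∀ x y ρ, 0 < ρ → dist x y < ρ → μ (ball x ρ) ≤ C * μ (ball y ρ))
    (hmb : ∀ x ρ, 0 < ρ → μ (Blu (ball x ρ) (t * ρ)) ≤ K * μ (ball x ρ)) {S : Finset ι}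
    (hS : IsSelection μ c r t S) (z : X) :
    ∑ k ∈ S, (ball (c k) (r k)).indicator (fun _ => weight μ c r t S k) z ≤ 1 + C * K := by
  classical
  rw [sum_indicator_eq_sum_filter]
  set J := {k ∈ S | z ∈ ball (c k) (r k)}
  rcases J.eq_empty_or_nonempty with hJ | hJ
  · simp [hJ]
  obtain ⟨b, hbJ, hbmin⟩ := J.exists_min_image r hJ
  rw [← sum_filter_add_sum_filter_not J (fun k => r b < r k), filter_filter, filter_filter]
  refine add_le_add (sum_weight_lt_one_of_mem μ c r t hsparse hS (mem_filter.mp hbJ).1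
    (mem_filter.mp hbJ).2).le ?_
  calc ∑ k ∈ S with z ∈ ball (c k) (r k) ∧ ¬r b < r k, weight μ c r t S k
      = ∑ k ∈ S with z ∈ ball (c k) (r k) ∧ r k = r b, weight μ c r t S k := by
        refine sum_congr (filter_congr fun k hk => and_congr_right fun hzk => ?_) fun _ _ => rfl
        exact ⟨fun h => le_antisymm (not_lt.mp h) (hbmin k (mem_filter.mpr ⟨hk, hzk⟩)),
          fun h => h.not_gt⟩
    _ ≤ C * K := sum_weight_le_of_radius_eq μ c r t hC hC' ht hloc hmb S z (hr b)

end SteinStromberg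

theorem le_mul_of_lt_of_lacunary {T t : ℝ} {rad : ℤ → ℝ} (hT : 1 ≤ T) (hpos : ∀ n, 0 < rad n)
    (hlac : ∀ n, T ≤ rad (n + 1) / rad n) (ht : 0 ≤ t) (hTt : 1 ≤ T * t) {m n : ℤ}
    (hmn : rad m < rad n) : rad m ≤ t * rad n := by
  have hstep : ∀ n, T * rad n ≤ rad (n + 1) := fun n => (le_div_iff₀ (hpos n)).mp (hlac n)
  have hmono : Monotone rad := monotone_int_of_le_succ fun n =>
    (le_mul_of_one_le_left (hpos n).le hT).trans (hstep n)
  have hlt : m < n := lt_of_not_ge fun h => hmn.not_ge (hmono h)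
  calc rad m ≤ T * t * rad m := le_mul_of_one_le_left (hpos m).le hTt
    _ = t * (T * rad m) := by ring
    _ ≤ t * rad n := mul_le_mul_of_nonneg_left ((hstep m).trans (hmono (by omega))) ht

theorem stein_stromberg_sparse_radii_general
    {X : Type*} [MetricSpace X] [MeasurableSpace X] [BorelSpace X]
    (μ : Measure X)
    -- local comparability with constant C(μ)
    (C : ℝ) (hC : 1 ≤ C)
    (hloc : ∀ (x y : X) (r : ℝ), 0 < r → dist x y < r →
      μ (ball x r) ≤ ENNReal.ofReal C * μ (ball y r))
    -- a T-lacunary sequence of radii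
    (T : ℝ) (hT : 1 < T)
    (rad : ℤ → ℝ) (hradpos : ∀ n, 0 < rad n)
    (hlac : ∀ n, T ≤ rad (n + 1) / rad n)
    -- μ (t,K)-microblossoms boundedly, with T·t ≥ 1
    (t K : ℝ) (ht0 : 0 < t) (hTt : 1 ≤ T * t) (hK : 1 ≤ K)
    (hmb : ∀ (x : X) (r : ℝ), 0 < r →
      μ (Blu (ball x r) (t * r)) ≤ ENNReal.ofReal K * μ (ball x r))
    -- a finite collection of balls with radii in R, positive measure,
    -- ordered by non-increasing radii
    (M : ℕ) (c : Fin M → X) (s : Fin M → ℝ)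
    (hsR : ∀ i, s i ∈ Set.range rad)
    (hord : ∀ i j : Fin M, i ≤ j → s j ≤ s i) :
    ∃ (N : ℕ) (σ : Fin N → Fin M), StrictMono σ ∧
      μ (⋃ i, ball (c i) (t * s i)) ≤
        ENNReal.ofReal (K + 1) * μ (⋃ j, ball (c (σ j)) (t * s (σ j))) ∧
      ∀ z : X,
        ∑ j : Fin N,
          (ball (c (σ j)) (s (σ j))).indicator
            (fun _ => μ (ball (c (σ j)) (t * s (σ j)) \
                ⋃ k, ⋃ (_ : k < j), ball (c (σ k)) (t * s (σ k))) /
              μ (ball (c (σ j)) (s (σ j)))) z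
          ≤ ENNReal.ofReal (C * K + 1) := by
  have hs : ∀ i, 0 < s i := fun i => by
    obtain ⟨n, hn⟩ := hsR i
    exact hn ▸ hradpos n
  have hsparse : ∀ i k, s i < s k → s i ≤ t * s k := fun i k => by
    obtain ⟨m, hm⟩ := hsR i
    obtain ⟨n, hn⟩ := hsR k
    rw [← hm, ← hn]
    exact le_mul_of_lt_of_lacunary hT.le hradpos hlac ht0.le hTt
  have hC0 : ENNReal.ofReal C ≠ 0 := ENNReal.ofReal_ne_zero_iff.mpr (by linarith)
  obtain ⟨S, hS⟩ := SteinStromberg.exists_isSelection μ c s t fun i j h => hord i j h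
  refine ⟨S.card, S.orderEmbOfFin rfl, (S.orderEmbOfFin rfl).strictMono, ?_, fun z => ?_⟩
  · rw [iUnion_orderEmbOfFin (fun i => ball (c i) (t * s i)),
      ENNReal.ofReal_add (by linarith) zero_le_one, ENNReal.ofReal_one]
    exact SteinStromberg.measure_iUnion_le_of_isSelection μ c s t ht0.le hs hmb hS
  · rw [SteinStromberg.sum_orderEmbOfFin_indicator,
      ENNReal.ofReal_add (by nlinarith) zero_le_one, ENNReal.ofReal_one,
      ENNReal.ofReal_mul (by linarith), add_comm]
    exact SteinStromberg.sum_indicator_weight_le μ c s t hC0 ENNReal.ofReal_ne_top ht0 hs hsparse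
      hloc hmb hS z

/-- **Stein–Strömberg covering theorem for sparse radii.** -/
theorem stein_stromberg_sparse_radii
    {X : Type*} [MetricSpace X] [MeasurableSpace X] [BorelSpace X]
    (μ : Measure X)
    -- metric measure space: finite on balls
    (hfin : ∀ (x : X) (r : ℝ), μ (ball x r) ≠ ⊤)
    -- metric measure space: τ-smoothness
    (hτ : ∀ (ι : Type*) (U : ι → Set X), (∀ i, IsOpen (U i)) →
      μ (⋃ i, U i) = ⨆ F : Finset ι, μ (⋃ i ∈ F, U i))
    -- local comparability with constant C(μ)
    (C : ℝ) (hC : 1 ≤ C)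
    (hloc : ∀ (x y : X) (r : ℝ), 0 < r → dist x y < r →
      μ (ball x r) ≤ ENNReal.ofReal C * μ (ball y r))
    -- a T-lacunary sequence of radii
    (T : ℝ) (hT : 1 < T)
    (rad : ℤ → ℝ) (hradpos : ∀ n, 0 < rad n)
    (hlac : ∀ n, T ≤ rad (n + 1) / rad n)
    -- μ (t,K)-microblossoms boundedly, with T·t ≥ 1
    (t K : ℝ) (ht0 : 0 < t) (ht1 : t < 1) (hTt : 1 ≤ T * t) (hK : 1 ≤ K)
    (hmb : ∀ (x : X) (r : ℝ), 0 < r →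
      μ (Blu (ball x r) (t * r)) ≤ ENNReal.ofReal K * μ (ball x r))
    -- a finite collection of balls with radii in R, positive measure,
    -- ordered by non-increasing radii
    (M : ℕ) (c : Fin M → X) (s : Fin M → ℝ)
    (hsR : ∀ i, s i ∈ Set.range rad)
    (hpos : ∀ i, 0 < μ (ball (c i) (s i)))
    (hord : ∀ i j : Fin M, i ≤ j → s j ≤ s i) :
    ∃ (N : ℕ) (σ : Fin N → Fin M), StrictMono σ ∧
      μ (⋃ i, ball (c i) (t * s i)) ≤
        ENNReal.ofReal (K + 1) * μ (⋃ j, ball (c (σ j)) (t * s (σ j))) ∧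
      ∀ z : X,
        ∑ j : Fin N,
          (ball (c (σ j)) (s (σ j))).indicator
            (fun _ => μ (ball (c (σ j)) (t * s (σ j)) \
                ⋃ k, ⋃ (_ : k < j), ball (c (σ k)) (t * s (σ k))) /
              μ (ball (c (σ j)) (s (σ j)))) z
          ≤ ENNReal.ofReal (C * K + 1) :=
  stein_stromberg_sparse_radii_general μ C hC hloc T hT rad hradpos hlac t K ht0 hTt hK hmb M c s
    hsR hord
end

section
/- Let (X,d) be a metric space. The following are equivalent: (a) X has the approximate midpoint property; (b) for all x ∈ X and all r, s > 0, Bl(x,r,s) = B(x,r+s); (c) for all x ∈ X and all r > 0, Bl(x,r,r) = B(x,2r). -/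
open Metric

/-- The `s`-blossom of a set `S`: `Bl(S,s) = ⋃_{x ∈ S} B(x,s)`. -/
def Bl {X : Type*} [PseudoMetricSpace X] (S : Set X) (s : ℝ) : Set X :=
  ⋃ x ∈ S, ball x s

/-- A metric space has the approximate midpoint property if for every `ε > 0`
and every pair of points `x, y` there is a point `z` with
`d(x,z), d(z,y) < ε + d(x,y)/2`. -/
def ApproxMidpointProperty (X : Type*) [PseudoMetricSpace X] : Prop :=
  ∀ ε : ℝ, 0 < ε → ∀ x y : X, ∃ z : X,
    dist x z < ε + dist x y / 2 ∧ dist z y < ε + dist x y / 2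

/-! Call `X` approximately `t`-divisible if every pair `x, y` has, up to any `ε > 0`, a point at
distance `t·d(x,y)` from `x` and `(1-t)·d(x,y)` from `y`; the approximate midpoint property is the
case `t = 1/2`. Composing with approximate midpoints, the set of such `t` is stable under
`t ↦ t/2`, and by swapping `x` and `y` under `t ↦ 1 - t`, so binary approximation makes it dense
in `[0,1]`; being closed, it is all of `[0,1]`. Taking `t = r/(r+s)` puts every `y ∈ B(x, r+s)`
into some `B(z, s)` with `z ∈ B(x, r)`. Conversely, `Bl(x,r,r) = B(x,2r)` with `2r` just above
`d(x,y)` produces approximate midpoints. -/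

open Set

def ApproxDivisibleAt (X : Type*) [PseudoMetricSpace X] (t : ℝ) : Prop :=
  ∀ ε : ℝ, 0 < ε → ∀ x y : X, ∃ z : X,
    dist x z < t * dist x y + ε ∧ dist z y < (1 - t) * dist x y + ε

namespace ApproxDivisibleAt

variable {X : Type*} [PseudoMetricSpace X] {t : ℝ}

theorem zero : ApproxDivisibleAt X 0 := fun ε hε x y =>
  ⟨x, by simpa using hε, by simpa using hε⟩

theorem one_sub (h : ApproxDivisibleAt X t) : ApproxDivisibleAt X (1 - t) := by
  intro ε hε x y
  obtain ⟨z, hyz, hzx⟩ := h ε hε y x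
  rw [dist_comm y x] at hyz hzx
  refine ⟨z, ?_, ?_⟩
  · rwa [dist_comm]
  · rwa [dist_comm, sub_sub_cancel]

theorem half (hX : ApproxMidpointProperty X) (ht₀ : 0 ≤ t) (ht₁ : t ≤ 1)
    (h : ApproxDivisibleAt X t) : ApproxDivisibleAt X (t / 2) := by
  intro ε hε x y
  obtain ⟨m, hxm, hmy⟩ := hX (ε / 4) (by positivity) x y
  obtain ⟨z, hxz, hzm⟩ := h (ε / 2) (by positivity) x m
  have hxm' : t * dist x m ≤ t * (ε / 4 + dist x y / 2) := by gcongr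
  have hxm'' : (1 - t) * dist x m ≤ (1 - t) * (ε / 4 + dist x y / 2) := by gcongr
  refine ⟨z, by nlinarith, ?_⟩
  calc dist z y ≤ dist z m + dist m y := dist_triangle z m y
    _ < (1 - t) * dist x m + ε / 2 + (ε / 4 + dist x y / 2) := add_lt_add hzm hmy
    _ ≤ (1 - t / 2) * dist x y + ε := by nlinarith

theorem of_forall_abs_sub_lt (h : ∀ δ > 0, ∃ t', ApproxDivisibleAt X t' ∧ |t - t'| < δ) :
    ApproxDivisibleAt X t := by
  intro ε hε x y
  set δ := ε / (2 * (dist x y + 1))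
  obtain ⟨t', ht', htt'⟩ := h δ (by positivity)
  obtain ⟨z, hxz, hzy⟩ := ht' (ε / 2) (by positivity) x y
  have hδ : δ * dist x y ≤ ε / 2 := by
    rw [div_mul_eq_mul_div, div_le_iff₀ (by positivity)]
    nlinarith [dist_nonneg (x := x) (y := y)]
  have hδ' : |t - t'| * dist x y ≤ δ * dist x y := by gcongr
  refine ⟨z, ?_, ?_⟩ <;>
    nlinarith [dist_nonneg (x := x) (y := y), neg_abs_le (t - t'), le_abs_self (t - t')]

theorem exists_abs_sub_le (hX : ApproxMidpointProperty X) (n : ℕ) :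
    ∀ t ∈ Icc (0 : ℝ) 1,
      ∃ t' ∈ Icc (0 : ℝ) 1, ApproxDivisibleAt X t' ∧ |t - t'| ≤ (1 / 2) ^ n := by
  induction n with
  | zero =>
    intro t ht
    exact ⟨0, ⟨le_rfl, zero_le_one⟩, zero, by simpa [abs_of_nonneg ht.1] using ht.2⟩
  | succ n ih =>
    intro t ht
    wlog hle : t ≤ 1 / 2 generalizing t with H
    · obtain ⟨t', ht', h', hd⟩ := H (1 - t) ⟨by linarith [ht.2], by linarith [ht.1]⟩ (by linarith)
      refine ⟨1 - t', ⟨by linarith [ht'.2], by linarith [ht'.1]⟩, h'.one_sub, ?_⟩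
      rwa [show t - (1 - t') = -(1 - t - t') by ring, abs_neg]
    obtain ⟨t', ht', h', hd⟩ := ih (2 * t) ⟨by linarith [ht.1], by linarith⟩
    refine ⟨t' / 2, ⟨by linarith [ht'.1], by linarith [ht'.2]⟩, h'.half hX ht'.1 ht'.2, ?_⟩
    rw [show t - t' / 2 = (2 * t - t') / 2 by ring, abs_div, abs_two, pow_succ]
    linarith

theorem of_approxMidpointProperty (hX : ApproxMidpointProperty X) (ht : t ∈ Icc (0 : ℝ) 1) :
    ApproxDivisibleAt X t :=
  of_forall_abs_sub_lt fun δ hδ => by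
    obtain ⟨n, hn⟩ := exists_pow_lt_of_lt_one hδ (by norm_num : (1 / 2 : ℝ) < 1)
    obtain ⟨t', -, h', hd⟩ := exists_abs_sub_le hX n t ht
    exact ⟨t', h', hd.trans_lt hn⟩

end ApproxDivisibleAt

section Blossom

variable {X : Type*} [PseudoMetricSpace X]

theorem ApproxMidpointProperty.exists_dist_lt_dist_lt (hX : ApproxMidpointProperty X) {x y : X}
    {r s : ℝ} (hr : 0 < r) (hs : 0 < s) (hxy : dist x y < r + s) :
    ∃ z, dist x z < r ∧ dist z y < s := by
  set t := r / (r + s) with ht_def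
  have htrs : t * (r + s) = r := by rw [ht_def]; field_simp
  have ht₀ : 0 < t := by positivity
  have ht₁ : t < 1 := (div_lt_one (by positivity)).mpr (by linarith)
  have ht : t ∈ Icc (0 : ℝ) 1 := ⟨ht₀.le, ht₁.le⟩
  have hr' : t * dist x y < r := by nlinarith
  have hs' : (1 - t) * dist x y < s := by nlinarith
  obtain ⟨z, hxz, hzy⟩ := ApproxDivisibleAt.of_approxMidpointProperty hX ht
    (min (r - t * dist x y) (s - (1 - t) * dist x y)) (lt_min (by linarith) (by linarith)) x y
  exact ⟨z, by linarith [min_le_left (r - t * dist x y) (s - (1 - t) * dist x y)],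
    by linarith [min_le_right (r - t * dist x y) (s - (1 - t) * dist x y)]⟩

theorem mem_Bl {S : Set X} {s : ℝ} {y : X} : y ∈ Bl S s ↔ ∃ z ∈ S, dist y z < s := by
  simp [Bl]

theorem Bl_ball_subset_ball (x : X) (r s : ℝ) : Bl (ball x r) s ⊆ ball x (r + s) := by
  intro y hy
  obtain ⟨z, hz, hyz⟩ := mem_Bl.mp hy
  calc dist y x ≤ dist y z + dist z x := dist_triangle y z x
    _ < r + s := by rw [add_comm r]; exact add_lt_add hyz hz

theorem ApproxMidpointProperty.Bl_ball_eq_ball_add (hX : ApproxMidpointProperty X) (x : X)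
    {r s : ℝ} (hr : 0 < r) (hs : 0 < s) : Bl (ball x r) s = ball x (r + s) := by
  refine (Bl_ball_subset_ball x r s).antisymm fun y hy => ?_
  obtain ⟨z, hxz, hzy⟩ := hX.exists_dist_lt_dist_lt hr hs (mem_ball'.mp hy)
  exact mem_Bl.mpr ⟨z, mem_ball'.mpr hxz, by rwa [dist_comm]⟩

theorem approxMidpointProperty_of_Bl_ball_self
    (h : ∀ (x : X) (r : ℝ), 0 < r → Bl (ball x r) r = ball x (2 * r)) :
    ApproxMidpointProperty X := by
  intro ε hε x y
  set r := dist x y / 2 + ε / 2 with hr_def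
  have hr : 0 < r := by positivity
  have hy : y ∈ ball x (2 * r) := mem_ball'.mpr (by linarith)
  rw [← h x r hr] at hy
  obtain ⟨z, hxz, hyz⟩ := mem_Bl.mp hy
  rw [mem_ball'] at hxz
  rw [dist_comm] at hyz
  exact ⟨z, by linarith, by linarith⟩

end Blossom

/-- For a metric space `X` the following are equivalent: (a) `X` has the
approximate midpoint property; (b) `Bl(x,r,s) = B(x,r+s)` for all `x` and all
`r, s > 0`; (c) `Bl(x,r,r) = B(x,2r)` for all `x` and all `r > 0`. -/
theorem approx_midpoint_iff_blossom {X : Type*} [MetricSpace X] :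
    (ApproxMidpointProperty X ↔
      ∀ (x : X) (r s : ℝ), 0 < r → 0 < s → Bl (ball x r) s = ball x (r + s)) ∧
    (ApproxMidpointProperty X ↔
      ∀ (x : X) (r : ℝ), 0 < r → Bl (ball x r) r = ball x (2 * r)) := by
  have hab : ApproxMidpointProperty X →
      ∀ (x : X) (r s : ℝ), 0 < r → 0 < s → Bl (ball x r) s = ball x (r + s) :=
    fun hX x _ _ hr hs => hX.Bl_ball_eq_ball_add x hr hs
  have hbc : (∀ (x : X) (r s : ℝ), 0 < r → 0 < s → Bl (ball x r) s = ball x (r + s)) →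
      ∀ (x : X) (r : ℝ), 0 < r → Bl (ball x r) r = ball x (2 * r) :=
    fun h x r hr => by rw [h x r r hr hr, two_mul]
  have hca := approxMidpointProperty_of_Bl_ball_self (X := X)
  exact ⟨⟨hab, hca ∘ hbc⟩, ⟨hbc ∘ hab, hca⟩⟩
end

section
/- Let d ≥ 1, equip ℤ^d with the ℓ_∞ metric d(x,y) = max_i |x_i − y_i|, and let μ be the counting measure. Then μ(B(0,1)) = 1, while for every t > 0, μ(B(0,1+t)) ≥ 3^d. Consequently, for every t > 0 and every K < 3^d, μ is not (t,K)-microdoubling: there exist x ∈ ℤ^d and r > 0 with μ(B(x,(1+t)r)) > K·μ(B(x,r)). -/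
/-! Distinct points of `ℤ^d` are at distance at least `1`, so the open unit ball is a single point,
while every larger ball contains the closed unit ball, the cube `x + {-1, 0, 1}^d`. -/

open MeasureTheory Metric ENNReal

namespace Int

theorem ball_one (x : ℤ) : ball x 1 = {x} := by
  ext y
  refine ⟨fun hy => ?_, fun hy => hy ▸ mem_ball_self one_pos⟩
  by_contra hne
  exact (pairwise_one_le_dist hne).not_gt hy

theorem closedBall_one (x : ℤ) : closedBall x 1 = Set.Icc (x - 1) (x + 1) := by
  rw [closedBall_eq_Icc]
  congr 1 <;> norm_cast <;> simp

variable {ι : Type*} [Fintype ι]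

theorem pi_ball_one (x : ι → ℤ) : ball x 1 = {x} := by
  simp only [ball_pi x one_pos, ball_one, Set.univ_pi_singleton]

theorem pi_closedBall_one (x : ι → ℤ) : closedBall x 1 = Set.Icc (x - 1) (x + 1) := by
  simp only [closedBall_pi x zero_le_one, closedBall_one, ← Set.pi_univ_Icc, Pi.sub_apply,
    Pi.add_apply, Pi.one_apply]

theorem count_pi_closedBall_one (x : ι → ℤ) :
    Measure.count (closedBall x 1) = 3 ^ Fintype.card ι := by
  classical
  rw [pi_closedBall_one, ← Finset.coe_Icc, Measure.count_apply_finset, Pi.card_Icc]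
  have h_three (i : ι) : (x i + 1 + 1 - (x i - 1)).toNat = 3 := by omega
  simp [h_three]

end Int

theorem counting_measure_not_microdoubling_general (d : ℕ) :
    Measure.count (ball (0 : Fin d → ℤ) 1) = 1 ∧
    (∀ t : ℝ, 0 < t →
      (3 : ℝ≥0∞) ^ d ≤ Measure.count (ball (0 : Fin d → ℤ) (1 + t))) ∧
    (∀ t K : ℝ, 0 < t → K < 3 ^ d →
      ∃ (x : Fin d → ℤ) (r : ℝ), 0 < r ∧
        ENNReal.ofReal K * Measure.count (ball x r) <
          Measure.count (ball x ((1 + t) * r))) := by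
  have h_unit : Measure.count (ball (0 : Fin d → ℤ) 1) = 1 := by
    rw [Int.pi_ball_one, Measure.count_singleton]
  have h_grow (t : ℝ) (ht : 0 < t) :
      (3 : ℝ≥0∞) ^ d ≤ Measure.count (ball (0 : Fin d → ℤ) (1 + t)) := by
    calc (3 : ℝ≥0∞) ^ d = Measure.count (closedBall (0 : Fin d → ℤ) 1) := by
          rw [Int.count_pi_closedBall_one, Fintype.card_fin]
      _ ≤ _ := measure_mono (closedBall_subset_ball (by linarith))
  refine ⟨h_unit, h_grow, fun t K ht hK => ⟨0, 1, one_pos, ?_⟩⟩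
  rw [mul_one, h_unit, mul_one]
  calc ENNReal.ofReal K < ENNReal.ofReal (3 ^ d) :=
        (ENNReal.ofReal_lt_ofReal_iff (by positivity)).mpr hK
    _ = 3 ^ d := by rw [ENNReal.ofReal_pow zero_le_three]; norm_num
    _ ≤ _ := h_grow t ht

/-- In `ℤ^d` with the `ℓ_∞` metric (the sup metric of `Fin d → ℤ`) and the
counting measure: the unit ball at `0` is a singleton, every ball `B(0,1+t)`
with `t > 0` has at least `3^d` points, and hence the counting measure is not
`(t,K)`-microdoubling for any `t > 0` and `K < 3^d`. -/
theorem counting_measure_not_microdoubling (d : ℕ) (hd : 1 ≤ d) :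
    Measure.count (ball (0 : Fin d → ℤ) 1) = 1 ∧
    (∀ t : ℝ, 0 < t →
      (3 : ℝ≥0∞) ^ d ≤ Measure.count (ball (0 : Fin d → ℤ) (1 + t))) ∧
    (∀ t K : ℝ, 0 < t → K < 3 ^ d →
      ∃ (x : Fin d → ℤ) (r : ℝ), 0 < r ∧
        ENNReal.ofReal K * Measure.count (ball x r) <
          Measure.count (ball x ((1 + t) * r))) :=
  counting_measure_not_microdoubling_general d
end

section
/- Let X = {0, 1, 3} with the metric inherited from ℝ, and let μ = δ₃ be the Dirac measure at 3. Then μ (1/2,1)-microblossoms boundedly: for all x ∈ X and r > 0, μ(Blu(x, r, r/2)) ≤ μ(B(x,r)). However, μ fails the local comparability condition: there exist x,y ∈ X and r > 0 with d(x,y) < r and μ(B(y,r)) = 0 < μ(B(x,r)) (for instance x = 1, y = 0, r = 5/2), so no constant C ≥ 1 satisfies μ(B(x,r)) ≤ C·μ(B(y,r)) for all x,y with d(x,y) < r. -/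
open MeasureTheory Metric ENNReal

/-- The three-point space `X = {0, 1, 3}` with the metric inherited from `ℝ`. -/
abbrev ThreePt : Type := {x : ℝ // x = 0 ∨ x = 1 ∨ x = 3}

/-- The Dirac measure `δ₃` on `{0, 1, 3}`. -/
noncomputable def diracThree : Measure ThreePt :=
  Measure.dirac ⟨3, by norm_num⟩

/-! The only way the blossom of `B(x, r)` can reach `3` without `B(x, r)` containing `3` is
through a ball of radius `r/2` containing `3` and another point of `X`; as `2` is missing
from `X`, such a ball has radius greater than `2`, and then `B(x, r)` is all of `X`. -/

section Blossom

variable {X : Type*} [PseudoMetricSpace X]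

theorem mem_Blu_iff {S : Set X} {s : ℝ} {p : X} :
    p ∈ Blu S s ↔ ∃ z ∈ S, ∃ y, z ∈ ball y s ∧ p ∈ ball y s := by
  simp only [Blu, Set.mem_iUnion, Set.mem_ofPred_eq, exists_prop]

theorem mem_ball_of_mem_Blu_ball_half {p x : X} {r δ : ℝ}
    (hsep : ∀ z y : X, z ≠ p → δ ≤ max (dist z y) (dist p y))
    (hrad : ∀ z : X, dist p z ≤ 2 * δ) (hp : p ∈ Blu (ball x r) (1 / 2 * r)) :
    p ∈ ball x r := by
  obtain ⟨z, hzx, y, hzy, hpy⟩ := mem_Blu_iff.mp hp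
  by_cases hzp : z = p
  · exact hzp ▸ hzx
  have hδ : δ < 1 / 2 * r := (hsep z y hzp).trans_lt (max_lt hzy hpy)
  rw [mem_ball]
  linarith [hrad x]

end Blossom

theorem MeasureTheory.Measure.dirac_apply_le_of_mem_imp {X : Type*} [MeasurableSpace X]
    [MeasurableSingletonClass X] {p : X} {s t : Set X} (h : p ∈ s → p ∈ t) :
    Measure.dirac p s ≤ Measure.dirac p t := by
  by_cases hs : p ∈ s <;> simp [Measure.dirac_apply, hs, h]

theorem not_forall_ball_le_mul_ball_of_null {X : Type*} [PseudoMetricSpace X]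
    [MeasurableSpace X] {μ : Measure X} {x y : X} {r : ℝ} (hy : μ (ball y r) = 0)
    (hx : 0 < μ (ball x r)) (hr : 0 < r) (hxy : dist x y < r) (C : ℝ) :
    ¬ ∀ (x y : X) (r : ℝ), 0 < r → dist x y < r →
        μ (ball x r) ≤ ENNReal.ofReal C * μ (ball y r) := by
  intro hC
  have := hC x y r hr hxy
  rw [hy, mul_zero] at this
  exact hx.ne' (nonpos_iff_eq_zero.mp this)

theorem ThreePt.dist_eq (x y : ThreePt) : dist x y = |x.1 - y.1| := rfl

theorem ThreePt.two_le_max_dist_three {z y : ThreePt} (hz : z ≠ ⟨3, by norm_num⟩) :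
    2 ≤ max (dist z y) (dist ⟨3, by norm_num⟩ y) := by
  obtain ⟨z, hz' | hz' | hz'⟩ := z <;> obtain ⟨y, hy | hy | hy⟩ := y <;>
    simp_all [ThreePt.dist_eq] <;> norm_num [abs_of_nonneg, abs_of_nonpos]

theorem ThreePt.dist_three_le (z : ThreePt) : dist ⟨3, by norm_num⟩ z ≤ 2 * 2 := by
  obtain ⟨z, hz | hz | hz⟩ := z <;> simp [ThreePt.dist_eq, hz] <;> norm_num

theorem diracThree_ball (x : ThreePt) (r : ℝ) :
    diracThree (ball x r) = if |x.1 - 3| < r then 1 else 0 := by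
  classical
  simp only [diracThree, Measure.dirac_apply, Set.indicator_apply, mem_ball, ThreePt.dist_eq,
    abs_sub_comm]
  rfl

/-- On `X = {0,1,3} ⊆ ℝ`, the measure `δ₃` `(1/2,1)`-microblossoms boundedly,
yet local comparability fails: there are `x, y` with `d(x,y) < r`,
`μ(B(y,r)) = 0` and `μ(B(x,r)) > 0` (e.g. `x = 1`, `y = 0`, `r = 5/2`), so no
constant `C ≥ 1` works. -/
theorem dirac_microblossoms_but_not_locally_comparable :
    (∀ (x : ThreePt) (r : ℝ), 0 < r →
      diracThree (Blu (ball x r) ((1 / 2) * r)) ≤ 1 * diracThree (ball x r)) ∧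
    (∃ (x y : ThreePt) (r : ℝ), 0 < r ∧ dist x y < r ∧
      diracThree (ball y r) = 0 ∧ 0 < diracThree (ball x r)) ∧
    ¬ ∃ C : ℝ, 1 ≤ C ∧ ∀ (x y : ThreePt) (r : ℝ), 0 < r → dist x y < r →
        diracThree (ball x r) ≤ ENNReal.ofReal C * diracThree (ball y r) := by
  have hy : diracThree (ball ⟨0, by norm_num⟩ (5 / 2)) = 0 := by
    rw [diracThree_ball]; norm_num
  have hx : 0 < diracThree (ball ⟨1, by norm_num⟩ (5 / 2)) := by
    rw [diracThree_ball]; norm_num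
  have hxy : dist (⟨1, by norm_num⟩ : ThreePt) ⟨0, by norm_num⟩ < 5 / 2 := by
    rw [ThreePt.dist_eq]; norm_num
  refine ⟨fun x r _ => ?_, ⟨_, _, 5 / 2, by norm_num, hxy, hy, hx⟩,
    fun ⟨C, _, hC⟩ => not_forall_ball_le_mul_ball_of_null hy hx (by norm_num) hxy C hC⟩
  rw [one_mul]
  exact Measure.dirac_apply_le_of_mem_imp
    (mem_ball_of_mem_Blu_ball_half (fun _ _ => ThreePt.two_le_max_dist_three)
      ThreePt.dist_three_le)
end

section
/- Let X = ({0} × [0,1]) ∪ ([0,1] × {0}) ⊂ ℝ², equipped with the metric obtained by restricting the ℓ_∞ norm of ℝ². Then (i) B((1,0), 1) = (0,1] × {0}; (ii) for every r > 1, B((1,0), r) = X; and (iii) X is not contained in the uncentered blossom Blu((1,0), 1, 1/6). -/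
/-!
Both coordinates of a point of the cross lie in `[0,1]`, so every distance in it is at most `1`;
on the vertical arm the distance to `(1,0)` is exactly `1`. For (iii), a point of the `s`-blossom
of `S` is within `2s` of `S`, via the centre of a ball of radius `s` meeting both; but `(0,1)`
is at distance `1 > 2 / 6` from the horizontal arm, which contains `B((1,0),1)`.
-/

open Metric

/-- The cross `({0} × [0,1]) ∪ ([0,1] × {0}) ⊆ ℝ²`, where `ℝ² = ℝ × ℝ` carries
the `ℓ_∞` (sup) metric `d(u,v) = max(|u₁ − v₁|, |u₂ − v₂|)`, which is the
product metric of `ℝ × ℝ`. -/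
abbrev Cross : Type :=
  {p : ℝ × ℝ // p ∈ ({0} ×ˢ Set.Icc (0:ℝ) 1) ∪ (Set.Icc (0:ℝ) 1 ×ˢ {0})}

/-- The point `(1,0)` of the cross. -/
def crossPt : Cross :=
  ⟨(1, 0), Or.inr (Set.mk_mem_prod (by norm_num) rfl)⟩

theorem Blu_subset_thickening {X : Type*} [PseudoMetricSpace X] (S : Set X) (s : ℝ) :
    Blu S s ⊆ thickening (2 * s) S := by
  intro z hz
  simp only [Blu, Set.mem_iUnion, Set.mem_ofPred_eq, mem_ball, exists_prop] at hz
  obtain ⟨x, hxS, y, hxy, hzy⟩ := hz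
  refine mem_thickening_iff.2 ⟨x, hxS, ?_⟩
  calc dist z x ≤ dist z y + dist x y := dist_triangle_right z x y
    _ < 2 * s := by linarith

namespace Cross

theorem dist_eq (p q : Cross) : dist p q = max |p.1.1 - q.1.1| |p.1.2 - q.1.2| := by
  rw [Subtype.dist_eq, Prod.dist_eq, Real.dist_eq, Real.dist_eq]

theorem coords_mem_Icc (p : Cross) : p.1.1 ∈ Set.Icc (0:ℝ) 1 ∧ p.1.2 ∈ Set.Icc (0:ℝ) 1 := by
  rcases p.2 with ⟨h1, h2⟩ | ⟨h1, h2⟩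
  · exact ⟨by simp [Set.mem_singleton_iff.1 h1], h2⟩
  · exact ⟨h1, by simp [Set.mem_singleton_iff.1 h2]⟩

theorem dist_le_one (p q : Cross) : dist p q ≤ 1 := by
  rw [Subtype.dist_eq, Prod.dist_eq]
  exact max_le (Real.dist_le_of_mem_Icc_01 p.coords_mem_Icc.1 q.coords_mem_Icc.1)
    (Real.dist_le_of_mem_Icc_01 p.coords_mem_Icc.2 q.coords_mem_Icc.2)

theorem ball_crossPt_one :
    ball crossPt 1 = Subtype.val ⁻¹' (Set.Ioc (0:ℝ) 1 ×ˢ ({0} : Set ℝ)) := by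
  ext ⟨⟨a, b⟩, hp⟩
  simp only [Set.mem_union, Set.mem_prod, Set.mem_singleton_iff, Set.mem_Icc] at hp
  simp only [mem_ball, dist_eq, crossPt, Set.mem_preimage, Set.mem_prod,
    Set.mem_Ioc, Set.mem_singleton_iff, max_lt_iff, abs_sub_lt_iff]
  constructor
  · rintro ⟨⟨h1, h2⟩, -⟩
    rcases hp with ⟨rfl, -⟩ | ⟨⟨-, ha1⟩, rfl⟩
    · linarith
    · exact ⟨⟨by linarith, ha1⟩, rfl⟩
  · rintro ⟨⟨ha0, ha1⟩, rfl⟩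
    exact ⟨⟨by linarith, by linarith⟩, by norm_num, by norm_num⟩

def top : Cross :=
  ⟨(0, 1), Or.inl (Set.mk_mem_prod rfl (by norm_num))⟩

theorem top_notMem_thickening_ball_crossPt {δ : ℝ} (hδ : δ ≤ 1) :
    top ∉ thickening δ (ball crossPt 1) := by
  rw [mem_thickening_iff]
  rintro ⟨x, hx, hdist⟩
  rw [ball_crossPt_one] at hx
  have hx₂ : x.1.2 = 0 := hx.2
  have : 1 ≤ dist top x := by
    rw [dist_eq]
    simp [top, hx₂]
  linarith

end Cross

/-- In the cross `X = ({0} × [0,1]) ∪ ([0,1] × {0})` with the restricted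
`ℓ_∞` metric: (i) `B((1,0),1) = (0,1] × {0}`; (ii) `B((1,0),r) = X` for every
`r > 1`; (iii) `X` is not contained in `Blu((1,0), 1, 1/6)`. -/
theorem cross_ball_blossom :
    ball crossPt 1 = Subtype.val ⁻¹' (Set.Ioc (0:ℝ) 1 ×ˢ ({0} : Set ℝ)) ∧
    (∀ r : ℝ, 1 < r → ball crossPt r = Set.univ) ∧
    ¬ (Set.univ : Set Cross) ⊆ Blu (ball crossPt 1) (1 / 6) := by
  refine ⟨Cross.ball_crossPt_one, fun r hr => ?_, fun hcover => ?_⟩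
  · exact Set.eq_univ_of_forall fun p => mem_ball.2 ((Cross.dist_le_one p crossPt).trans_lt hr)
  · exact Cross.top_notMem_thickening_ball_crossPt (by norm_num)
      (Blu_subset_thickening _ _ (hcover (Set.mem_univ Cross.top)))
end

section
/- Let X = {u ∈ ℝ² : |u| = 1} be the unit circle with the chordal metric, i.e., the restriction to X of the Euclidean metric of ℝ². Then (i) X does not have the approximate midpoint property; (ii) B((1,0), 2) = X \ {(−1,0)}; (iii) Bl((1,0), √2, √2) = B((1,0), 2); and (iv) Bl((1,0), 1, 1) ≠ B((1,0), 2). -/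
/-!
On the unit sphere of a real inner product space `d(u,v)² = 2 − 2⟪u,v⟫`, so every condition on
distances is one on inner products; in particular `d(u,v)² + d(u,−v)² = 4`. Hence two antipodal
points have no approximate midpoint, and `d(u,p) < 2` exactly when `u ≠ −p`. A ball of radius `√2`
is the open half-sphere `⟪u,p⟫ > 0`, and for `u ≠ −p` the normalised `p + u` lies in the
half-spheres of both `p` and `u`. A ball of radius `1` is the cap `⟪u,p⟫ > 1/2`; if `⟪p,w⟫ = −1/2`,
a point `x` in the caps of `p` and `w` would give `⟪x, p + w⟫ > 1 = ‖p + w‖`, against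
Cauchy–Schwarz.
-/

open Metric

/-- The unit circle in the plane (identified with `ℂ`) with the chordal
metric, i.e. the restriction of the Euclidean metric of the plane. -/
abbrev Circle' : Type := ↥(sphere (0 : ℂ) 1)

/-- The point `(1,0)` of the unit circle. -/
def circOne : Circle' := ⟨1, by simp⟩

/-- The point `(−1,0)` of the unit circle. -/
def circNegOne : Circle' := ⟨-1, by simp⟩

open scoped RealInnerProductSpace

section UnitSphere

variable {E : Type*} [NormedAddCommGroup E] [InnerProductSpace ℝ E]

theorem sphere_dist_sq (u v : sphere (0 : E) 1) : dist u v ^ 2 = 2 - 2 * ⟪(u : E), v⟫ := by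
  rw [Subtype.dist_eq, dist_eq_norm, norm_sub_sq_real, norm_eq_of_mem_sphere u,
    norm_eq_of_mem_sphere v]
  ring

theorem sphere_norm_add_sq (u v : sphere (0 : E) 1) :
    ‖(u : E) + v‖ ^ 2 = 2 + 2 * ⟪(u : E), v⟫ := by
  rw [norm_add_sq_real, norm_eq_of_mem_sphere u, norm_eq_of_mem_sphere v]
  ring

theorem sphere_dist_sq_add_dist_neg_sq (u v : sphere (0 : E) 1) :
    dist u v ^ 2 + dist u (-v) ^ 2 = 4 := by
  have h : dist u (-v) = ‖(u : E) + v‖ := by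
    rw [Subtype.dist_eq, coe_neg_sphere, dist_eq_norm, sub_neg_eq_add]
  rw [h, sphere_dist_sq, sphere_norm_add_sq]
  ring

theorem sphere_dist_lt_iff (u v : sphere (0 : E) 1) {r : ℝ} (hr : 0 ≤ r) :
    dist u v < r ↔ 2 - r ^ 2 < 2 * ⟪(u : E), v⟫ := by
  rw [← sq_lt_sq₀ dist_nonneg hr, sphere_dist_sq]
  constructor <;> intro h <;> linarith

theorem sphere_dist_lt_sqrt_two_iff (u v : sphere (0 : E) 1) :
    dist u v < √2 ↔ 0 < ⟪(u : E), v⟫ := by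
  rw [sphere_dist_lt_iff u v (Real.sqrt_nonneg 2), Real.sq_sqrt zero_le_two]
  constructor <;> intro h <;> linarith

theorem sphere_not_approxMidpointProperty [Nontrivial E] :
    ¬ ApproxMidpointProperty (sphere (0 : E) 1) := by
  intro h
  obtain ⟨q⟩ := ((NormedSpace.sphere_nonempty (x := (0 : E))).mpr zero_le_one).to_subtype
  have hq : dist q (-q) = 2 := by
    have := sphere_dist_sq_add_dist_neg_sq q q
    rw [dist_self] at this
    nlinarith [dist_nonneg (x := q) (y := -q)]
  obtain ⟨z, hqz, hz⟩ := h (1 / 4) (by norm_num) q (-q)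
  rw [hq, dist_comm] at hqz
  rw [hq] at hz
  have := sphere_dist_sq_add_dist_neg_sq z q
  nlinarith [dist_nonneg (x := z) (y := q), dist_nonneg (x := z) (y := -q)]

theorem sphere_ball_two (p : sphere (0 : E) 1) : ball p 2 = {-p}ᶜ := by
  ext u
  have h := sphere_dist_sq_add_dist_neg_sq u p
  rw [mem_ball, Set.mem_compl_singleton_iff, ← dist_ne_zero, ← sq_pos_iff,
    ← sq_lt_sq₀ dist_nonneg zero_le_two]
  constructor <;> intro h' <;> linarith

theorem sphere_exists_inner_pos_inner_pos {p u : sphere (0 : E) 1} (hu : u ≠ -p) :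
    ∃ x : sphere (0 : E) 1, 0 < ⟪(x : E), p⟫ ∧ 0 < ⟪(u : E), x⟫ := by
  set y : E := p + u
  have hy : y ≠ 0 := by
    rwa [Ne, add_eq_zero_iff_neg_eq, ← coe_neg_sphere, Subtype.coe_inj, eq_comm]
  have hpy : ⟪y, p⟫ = ‖y‖ ^ 2 / 2 := by
    rw [sphere_norm_add_sq, inner_add_left, real_inner_self_eq_norm_sq, norm_eq_of_mem_sphere,
      real_inner_comm]
    ring
  have huy : ⟪(u : E), y⟫ = ‖y‖ ^ 2 / 2 := by
    rw [sphere_norm_add_sq, inner_add_right, real_inner_self_eq_norm_sq, norm_eq_of_mem_sphere,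
      real_inner_comm (p : E)]
    ring
  have hpos : 0 < ‖y‖ := norm_pos_iff.mpr hy
  refine ⟨⟨‖y‖⁻¹ • y, by simp [norm_smul, hy]⟩, ?_, ?_⟩
  · rw [real_inner_smul_left, hpy]
    positivity
  · rw [real_inner_smul_right, huy]
    positivity

theorem sphere_Bl_ball_sqrt_two (p : sphere (0 : E) 1) : Bl (ball p √2) √2 = ball p 2 := by
  ext u
  simp only [Bl, Set.mem_iUnion₂, mem_ball, exists_prop, sphere_dist_lt_sqrt_two_iff,
    sphere_ball_two, Set.mem_compl_singleton_iff]
  constructor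
  · rintro ⟨x, hxp, hux⟩ rfl
    rw [coe_neg_sphere, inner_neg_left, real_inner_comm] at hux
    linarith
  · exact sphere_exists_inner_pos_inner_pos

theorem sphere_notMem_Bl_ball_one {p w : sphere (0 : E) 1} (hpw : ⟪(p : E), w⟫ ≤ -1 / 2) :
    w ∉ Bl (ball p 1) 1 := by
  simp only [Bl, Set.mem_iUnion₂, mem_ball, exists_prop, not_exists, not_and]
  intro x hxp hwx
  rw [sphere_dist_lt_iff _ _ zero_le_one] at hxp hwx
  have hnorm : ‖(p : E) + w‖ ≤ 1 := by
    have := sphere_norm_add_sq p w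
    nlinarith [norm_nonneg ((p : E) + w)]
  have hinner : 1 < ⟪(x : E), p + w⟫ := by
    rw [inner_add_right, real_inner_comm (w : E)]
    linarith
  have := real_inner_le_norm (x : E) (p + w)
  rw [norm_eq_of_mem_sphere x, one_mul] at this
  linarith

end UnitSphere

theorem exists_circle_inner_one_eq_neg_half : ∃ w : Circle', ⟪(1 : ℂ), w⟫ = -1 / 2 := by
  refine ⟨⟨⟨-1 / 2, √3 / 2⟩, ?_⟩, by simp [Complex.inner]⟩
  rw [mem_sphere_zero_iff_norm, Complex.norm_eq_sqrt_sq_add_sq, Real.sqrt_eq_one]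
  norm_num [div_pow]

/-- For the unit circle `X` with the chordal metric: (i) `X` does not have the
approximate midpoint property; (ii) `B((1,0), 2) = X \ {(−1,0)}`;
(iii) `Bl((1,0), √2, √2) = B((1,0), 2)`; (iv) `Bl((1,0), 1, 1) ≠ B((1,0), 2)`. -/
theorem circle_chordal_blossoms :
    ¬ ApproxMidpointProperty Circle' ∧
    ball circOne 2 = (Set.univ : Set Circle') \ {circNegOne} ∧
    Bl (ball circOne (Real.sqrt 2)) (Real.sqrt 2) = ball circOne 2 ∧
    Bl (ball circOne 1) 1 ≠ ball circOne 2 := by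
  have hneg : circNegOne = -circOne := Subtype.ext (by simp [circOne, circNegOne])
  refine ⟨sphere_not_approxMidpointProperty, ?_, sphere_Bl_ball_sqrt_two circOne, ?_⟩
  · rw [sphere_ball_two, hneg, Set.compl_eq_univ_sdiff]
  · obtain ⟨w, hw⟩ := exists_circle_inner_one_eq_neg_half
    have hw_mem : w ∈ ball circOne 2 := by
      rw [sphere_ball_two, Set.mem_compl_singleton_iff]
      rintro rfl
      norm_num [circOne] at hw
    intro h
    exact sphere_notMem_Bl_ball_one hw.le (h ▸ hw_mem)
end
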